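/- arXiv:1306.3877 — 2 statements merged into one kernel-verified Lean document; each statement's English description precedes it below -/
import Mathlib

section
/- Let G be a finite simple undirected graph, let v be a vertex of G, let C be the connected component of G containing v, and let H_v be the auxiliary graph of v. Suppose that C \ {v} is not a cluster graph, and suppose that X = {w1, w2} is a minimum vertex cover of H_v (of size 2). Then in the graph G \ {v}, either the connected component containing w1 is not a clique, or the connected component containing w2 is not a clique. -/
variable {V : Type*}

/-- The graph obtained from `G` by deleting the vertex set `S`
(deleted vertices become isolated, which does not affect cluster-ness of the rest). -/
def SimpleGraph.deleteSet (G : SimpleGraph V) (S : Set V) : SimpleGraph V where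
  Adj a b := G.Adj a b ∧ a ∉ S ∧ b ∉ S
  symm := by
    constructor
    intro a b h
    exact ⟨h.1.symm, h.2.2, h.2.1⟩
  loopless := by
    constructor
    intro a h
    exact G.ne_of_adj h.1 rfl

/-- `(u, v, w)` is a `P₃` in `G`: an induced path on the three distinct vertices
`u`, `v`, `w` with edges `uv` and `vw` and non-edge `uw`. -/
def IsP3 (G : SimpleGraph V) (u v w : V) : Prop :=
  G.Adj u v ∧ G.Adj v w ∧ ¬ G.Adj u w ∧ u ≠ w

/-- A cluster graph is a graph containing no `P₃`. -/
def IsClusterGraph (G : SimpleGraph V) : Prop :=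
  ∀ u v w : V, ¬ IsP3 G u v w

/-- `S` is a modulator of `G`: deleting `S` from `G` yields a cluster graph. -/
def IsModulator (G : SimpleGraph V) (S : Set V) : Prop :=
  IsClusterGraph (G.deleteSet S)

/-- A solution is a modulator of minimum cardinality. -/
def IsSolution (G : SimpleGraph V) (S : Set V) : Prop :=
  IsModulator G S ∧ ∀ T : Set V, IsModulator G T → S.ncard ≤ T.ncard

/-- `N1 G v` is the neighbourhood of `v` in `G`. -/
def N1 (G : SimpleGraph V) (v : V) : Set V := G.neighborSet v

/-- `N2 G v = N_G(N_G[v])` is the set of vertices at distance exactly `2` from `v`. -/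
def N2 (G : SimpleGraph V) (v : V) : Set V :=
  {w | w ≠ v ∧ ¬ G.Adj v w ∧ ∃ u, G.Adj v u ∧ G.Adj u w}

/-- Adjacency in the auxiliary graph `H_v`: non-edges of `G` inside `N1`,
and edges of `G` between `N1` and `N2`. -/
def HvAdj (G : SimpleGraph V) (v a b : V) : Prop :=
  (a ∈ N1 G v ∧ b ∈ N1 G v ∧ a ≠ b ∧ ¬ G.Adj a b) ∨
  (a ∈ N1 G v ∧ b ∈ N2 G v ∧ G.Adj a b) ∨
  (b ∈ N1 G v ∧ a ∈ N2 G v ∧ G.Adj a b)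

/-- `X` is a vertex cover of the auxiliary graph `H_v`: a subset of
`V(H_v) = N1 ∪ N2` meeting every edge of `H_v`. -/
def IsVCHv (G : SimpleGraph V) (v : V) (X : Set V) : Prop :=
  X ⊆ N1 G v ∪ N2 G v ∧ ∀ a b : V, HvAdj G v a b → a ∈ X ∨ b ∈ X

/-- `X` is a vertex cover of the graph `H`. -/
def IsVC (H : SimpleGraph V) (X : Set V) : Prop :=
  ∀ a b : V, H.Adj a b → a ∈ X ∨ b ∈ X

/-- The connected component of `v` in `G` is a clique. -/
def ComponentIsClique (G : SimpleGraph V) (v : V) : Prop :=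
  ∀ u w : V, G.Reachable v u → G.Reachable v w → u ≠ w → G.Adj u w

/-- The auxiliary graph `H_v` is an `s`-skein with seagulls `(x i, y i, z i)`:
it is the disjoint union of `s` seagulls (paths on three vertices with middle
vertex `y i ∈ N1` and endpoints `x i, z i ∈ N2`) and isolated vertices. -/
def IsSkein (G : SimpleGraph V) (v : V) (s : ℕ) (x y z : Fin s → V) : Prop :=
  (∀ i, x i ∈ N2 G v ∧ y i ∈ N1 G v ∧ z i ∈ N2 G v) ∧
  (∀ i, x i ≠ z i) ∧
  (∀ i j, i ≠ j → ({x i, y i, z i} ∩ {x j, y j, z j} : Set V) = ∅) ∧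
  (∀ i, HvAdj G v (x i) (y i) ∧ HvAdj G v (y i) (z i) ∧ ¬ HvAdj G v (x i) (z i)) ∧
  (∀ a b : V, HvAdj G v a b →
    ∃ i, (a = x i ∧ b = y i) ∨ (a = y i ∧ b = x i) ∨
         (a = y i ∧ b = z i) ∨ (a = z i ∧ b = y i))

/-!
Let `(a, b, c)` be a `P₃` of `G - v` in the component of `v`. If the component of `b` in
`G - v` contains `w1` or `w2`, that component is not a clique. Otherwise it avoids the cover
`{w1, w2}` of `H_v`. It contains a neighbour of `v`, and an edge from a neighbour of `v` to a
non-neighbour would be an edge of `H_v` between `N1` and `N2`, so the whole component lies in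
`N1`. Then `ac` is a non-edge inside `N1`, an edge of `H_v` that the cover misses.
-/

open SimpleGraph

lemma SimpleGraph.Reachable.exists_adj_reachable_deleteSet {G : SimpleGraph V} {v x : V}
    (h : G.Reachable v x) (hx : x ≠ v) :
    ∃ u, G.Adj v u ∧ (G.deleteSet {v}).Reachable u x := by
  rw [reachable_iff_reflTransGen] at h
  induction h with
  | refl => exact absurd rfl hx
  | @tail y x _ hyx ih =>
    by_cases hy : y = v
    · exact ⟨x, hy ▸ hyx, .rfl⟩
    · obtain ⟨u, hvu, huy⟩ := ih hy
      exact ⟨u, hvu, huy.trans (Adj.reachable ⟨hyx, hy, hx⟩)⟩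

lemma not_componentIsClique_of_isP3 {G : SimpleGraph V} {w a b c : V} (h : IsP3 G a b c)
    (hwb : G.Reachable w b) : ¬ ComponentIsClique G w := fun hcl =>
  h.2.2.1 (hcl a c (hwb.trans h.1.reachable.symm) (hwb.trans h.2.1.reachable) h.2.2.2)

lemma adj_of_reachable_deleteSet_of_avoids_cover {G : SimpleGraph V} {v w x : V} {X : Set V}
    (hX : ∀ a b, HvAdj G v a b → a ∈ X ∨ b ∈ X) (hvw : G.Adj v w)
    (hwx : (G.deleteSet {v}).Reachable w x)
    (havoid : ∀ y ∈ X, ¬ (G.deleteSet {v}).Reachable w y) : G.Adj v x := by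
  rw [reachable_iff_reflTransGen] at hwx
  induction hwx with
  | refl => exact hvw
  | @tail y z hwy hyz hvy =>
    have hwy : (G.deleteSet {v}).Reachable w y := (reachable_iff_reflTransGen _ _).2 hwy
    by_contra hvz
    have hz : z ∈ N2 G v := ⟨hyz.2.2, hvz, y, hvy, hyz.1⟩
    rcases hX y z (Or.inr (Or.inl ⟨hvy, hz, hyz.1⟩)) with hyX | hzX
    · exact havoid y hyX hwy
    · exact havoid z hzX (hwy.trans hyz.reachable)

lemma exists_mem_reachable_of_isP3 {G : SimpleGraph V} {v a b c : V} {X : Set V}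
    (hX : ∀ a b, HvAdj G v a b → a ∈ X ∨ b ∈ X) (hP3 : IsP3 (G.deleteSet {v}) a b c)
    (hvb : G.Reachable v b) : ∃ x ∈ X, (G.deleteSet {v}).Reachable b x := by
  by_contra! havoid
  obtain ⟨u, hvu, hub⟩ := hvb.exists_adj_reachable_deleteSet hP3.1.2.2
  have hu : ∀ y ∈ X, ¬ (G.deleteSet {v}).Reachable u y := fun y hyX huy =>
    havoid y hyX (hub.symm.trans huy)
  have hva : G.Adj v a :=
    adj_of_reachable_deleteSet_of_avoids_cover hX hvu (hub.trans hP3.1.reachable.symm) hu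
  have hvc : G.Adj v c :=
    adj_of_reachable_deleteSet_of_avoids_cover hX hvu (hub.trans hP3.2.1.reachable) hu
  have hac : ¬ G.Adj a c := fun h => hP3.2.2.1 ⟨h, hP3.1.2.1, hP3.2.1.2.2⟩
  rcases hX a c (Or.inl ⟨hva, hvc, hP3.2.2.2, hac⟩) with haX | hcX
  · exact havoid a haX hP3.1.reachable.symm
  · exact havoid c hcX hP3.2.1.reachable

theorem stmt_8_general (G : SimpleGraph V) (v w1 w2 : V)
    (hCv : ∃ a b c : V, IsP3 (G.deleteSet {v}) a b c ∧
      G.Reachable v a ∧ G.Reachable v b ∧ G.Reachable v c)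
    (hX : IsVCHv G v {w1, w2}) :
    ¬ ComponentIsClique (G.deleteSet {v}) w1 ∨
      ¬ ComponentIsClique (G.deleteSet {v}) w2 := by
  obtain ⟨a, b, c, hP3, -, hvb, -⟩ := hCv
  obtain ⟨x, hx, hbx⟩ := exists_mem_reachable_of_isP3 hX.2 hP3 hvb
  rcases hx with rfl | rfl
  · exact .inl (not_componentIsClique_of_isP3 hP3 hbx.symm)
  · exact .inr (not_componentIsClique_of_isP3 hP3 hbx.symm)

/-- Suppose `C \ {v}` is not a cluster graph, where `C` is the
connected component of `v`, and `X = {w1, w2}` is a minimum vertex cover of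
`H_v` (of size 2). Then in `G \ {v}` the component of `w1` or the component of
`w2` is not a clique. -/
theorem stmt_8 [Fintype V] (G : SimpleGraph V) (v w1 w2 : V)
    (hCv : ∃ a b c : V, IsP3 (G.deleteSet {v}) a b c ∧
      G.Reachable v a ∧ G.Reachable v b ∧ G.Reachable v c)
    (hne : w1 ≠ w2)
    (hX : IsVCHv G v {w1, w2})
    (hmin : ∀ Y : Set V, IsVCHv G v Y → 2 ≤ Y.ncard) :
    ¬ ComponentIsClique (G.deleteSet {v}) w1 ∨
      ¬ ComponentIsClique (G.deleteSet {v}) w2 :=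
  stmt_8_general G v w1 w2 hCv hX
end

section
/- Let G be a finite simple undirected graph, let v be a vertex of G, and let H_v be the auxiliary graph of v. If H_v is an s-skein with seagulls (x_1,y_1,z_1), …, (x_s,y_s,z_s) (middle vertices y_i ∈ N1, endpoints x_i, z_i ∈ N2), and S is a modulator of G with v ∉ S such that there exist distinct indices i ≠ j with y_i ∉ S and y_j ∉ S, then x_i ∈ S and z_i ∈ S. -/
variable {V : Type*}

/-! Since `x i` and `z i` lie at distance two from `v` and are `G`-neighbours of
`y i ∈ N(v)`, both `v, y i, x i` and `v, y i, z i` are `P₃`s; a modulator avoiding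
`v` and `y i` must therefore contain `x i` and `z i`. -/

variable {G : SimpleGraph V} {v a b c : V} {S : Set V}

theorem IsModulator.mem_of_isP3 (hS : IsModulator G S) (h : IsP3 G a b c)
    (ha : a ∉ S) (hb : b ∉ S) : c ∈ S := by
  by_contra hc
  obtain ⟨hab, hbc, hac, hne⟩ := h
  exact hS a b c ⟨⟨hab, ha, hb⟩, ⟨hbc, hb, hc⟩, fun h => hac h.1, hne⟩

theorem hvAdj_comm : HvAdj G v a b ↔ HvAdj G v b a := by
  unfold HvAdj
  constructor <;>
  · rintro (⟨ha, hb, hne, hab⟩ | h | h)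
    · exact Or.inl ⟨hb, ha, hne.symm, fun h => hab h.symm⟩
    · exact Or.inr (Or.inr ⟨h.1, h.2.1, h.2.2.symm⟩)
    · exact Or.inr (Or.inl ⟨h.1, h.2.1, h.2.2.symm⟩)

theorem HvAdj.adj_of_mem_N2 (h : HvAdj G v a b) (hb : b ∈ N2 G v) : G.Adj a b := by
  obtain ⟨-, hvb, -⟩ := hb
  rcases h with ⟨-, hb', -⟩ | ⟨-, -, hab⟩ | ⟨hb', -⟩
  · exact absurd hb' hvb
  · exact hab
  · exact absurd hb' hvb

theorem isP3_of_mem_N1_of_mem_N2 (ha : a ∈ N1 G v) (hb : b ∈ N2 G v) (hab : G.Adj a b) :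
    IsP3 G v a b :=
  ⟨ha, hab, hb.2.1, hb.1.symm⟩

theorem IsModulator.mem_of_hvAdj (hS : IsModulator G S) (hv : v ∉ S)
    (ha : a ∈ N1 G v) (haS : a ∉ S) (hb : b ∈ N2 G v) (hab : HvAdj G v a b) : b ∈ S :=
  hS.mem_of_isP3 (isP3_of_mem_N1_of_mem_N2 ha hb (hab.adj_of_mem_N2 hb)) hv haS

theorem stmt_12_general (G : SimpleGraph V) (v : V) (s : ℕ)
    (x y z : Fin s → V) (hskein : IsSkein G v s x y z)
    (S : Set V) (hS : IsModulator G S) (hv : v ∉ S)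
    (i : Fin s) (hyi : y i ∉ S) :
    x i ∈ S ∧ z i ∈ S := by
  obtain ⟨hmem, -, -, hedges, -⟩ := hskein
  obtain ⟨hx, hy, hz⟩ := hmem i
  exact ⟨hS.mem_of_hvAdj hv hy hyi hx (hvAdj_comm.1 (hedges i).1),
    hS.mem_of_hvAdj hv hy hyi hz (hedges i).2.1⟩

/-- If `H_v` is an `s`-skein with seagulls `(x i, y i, z i)` and
`S` is a modulator with `v ∉ S`, and there are distinct indices `i ≠ j` with
`y i ∉ S` and `y j ∉ S`, then `x i ∈ S` and `z i ∈ S`. -/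
theorem stmt_12 [Fintype V] (G : SimpleGraph V) (v : V) (s : ℕ)
    (x y z : Fin s → V) (hskein : IsSkein G v s x y z)
    (S : Set V) (hS : IsModulator G S) (hv : v ∉ S)
    (i j : Fin s) (hij : i ≠ j) (hyi : y i ∉ S) (hyj : y j ∉ S) :
    x i ∈ S ∧ z i ∈ S :=
  stmt_12_general G v s x y z hskein S hS hv i hyi
end
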